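/- For any function u in H¹(0,a) with u(0) = u(a) = 0 and u not identically zero, the Pólya quotient (∫₀ᵃ u dx)² / ∫₀ᵃ (u')² dx is at most a³/12, with equality attained by u(x) = x(a-x)/2. -/

import Mathlib

/-!
Writing `u(x) = ∫₀ˣ u'`, integration by parts gives `∫₀ᵃ u = ∫₀ᵃ (a - t) u'(t) dt`, and since
`∫₀ᵃ u' = u(a) = 0` the weight `a - t` may be replaced by `a/2 - t`. Cauchy–Schwarz then bounds
`(∫₀ᵃ u)²` by `∫₀ᵃ (a/2 - t)² · ∫₀ᵃ (u')² = a³/12 · ∫₀ᵃ (u')²`, with equality when `u'` is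
proportional to `a/2 - t`, i.e. for `u(x) = x(a - x)/2`.
-/

open MeasureTheory intervalIntegral

theorem MeasureTheory.sq_integral_mul_le {α : Type*} [MeasurableSpace α]
    {μ : Measure α} {f g : α → ℝ} (hf : Integrable (fun x => f x ^ 2) μ)
    (hg : Integrable (fun x => g x ^ 2) μ) (hfg : Integrable (fun x => f x * g x) μ) :
    (∫ x, f x * g x ∂μ) ^ 2 ≤ (∫ x, f x ^ 2 ∂μ) * ∫ x, g x ^ 2 ∂μ := by
  have hquad : ∀ s : ℝ, 0 ≤ (∫ x, g x ^ 2 ∂μ) * (s * s) + 2 * (∫ x, f x * g x ∂μ) * s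
      + ∫ x, f x ^ 2 ∂μ := by
    intro s
    have hexp : (fun x => (f x + s * g x) ^ 2)
        = fun x => (s * s) * g x ^ 2 + (2 * s) * (f x * g x) + f x ^ 2 := by
      funext x; ring
    have hnonneg : 0 ≤ ∫ x, (f x + s * g x) ^ 2 ∂μ := integral_nonneg fun x => sq_nonneg _
    rw [hexp, integral_add ((hg.const_mul _).fun_add (hfg.const_mul _)) hf,
      integral_add (hg.const_mul _) (hfg.const_mul _), MeasureTheory.integral_const_mul,
      MeasureTheory.integral_const_mul] at hnonneg
    linarith
  have hdisc := discrim_le_zero hquad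
  rw [discrim] at hdisc
  nlinarith

theorem intervalIntegral.sq_integral_mul_le {f g : ℝ → ℝ} {a b : ℝ} (hab : a ≤ b)
    (hf : IntervalIntegrable (fun x => f x ^ 2) volume a b)
    (hg : IntervalIntegrable (fun x => g x ^ 2) volume a b)
    (hfg : IntervalIntegrable (fun x => f x * g x) volume a b) :
    (∫ x in a..b, f x * g x) ^ 2 ≤ (∫ x in a..b, f x ^ 2) * ∫ x in a..b, g x ^ 2 := by
  simp only [integral_of_le hab]
  exact MeasureTheory.sq_integral_mul_le hf.1 hg.1 hfg.1

theorem integral_primitive_eq_integral_sub_mul {f : ℝ → ℝ} {a b : ℝ}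
    (hf : IntervalIntegrable f volume a b) :
    ∫ x in a..b, (∫ t in a..x, f t) = ∫ t in a..b, (b - t) * f t := by
  have hF := hf.absolutelyContinuousOnInterval_intervalIntegral (c := a) Set.left_mem_uIcc
  have hg : AbsolutelyContinuousOnInterval (fun x => x - b) a b :=
    (contDiffOn_id.sub contDiffOn_const).absolutelyContinuousOnInterval
  have hparts := hF.integral_mul_deriv_eq_deriv_mul hg
  have hderiv : ∀ᵐ x, x ∈ Set.uIoc a b →
      deriv (fun x => ∫ t in a..x, f t) x * (x - b) = -((b - x) * f x) := by
    filter_upwards [hf.ae_hasDerivAt_integral] with x hx hxab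
    rw [(hx (Set.uIoc_subset_uIcc hxab) a Set.left_mem_uIcc).deriv]
    ring
  rw [integral_congr_ae hderiv, intervalIntegral.integral_neg] at hparts
  simpa using hparts

theorem integral_primitive_eq_integral_midpoint_sub_mul {f : ℝ → ℝ} {a b : ℝ}
    (hf : IntervalIntegrable f volume a b) (hf_zero : ∫ t in a..b, f t = 0) :
    ∫ x in a..b, (∫ t in a..x, f t) = ∫ t in a..b, ((a + b) / 2 - t) * f t := by
  have hshift : ∀ t, (b - t) * f t = (b - a) / 2 * f t + ((a + b) / 2 - t) * f t := fun t => by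
    ring
  have hmid : IntervalIntegrable (fun t => ((a + b) / 2 - t) * f t) volume a b :=
    hf.continuousOn_mul (by fun_prop)
  rw [integral_primitive_eq_integral_sub_mul hf, funext hshift,
    integral_add (hf.const_mul _) hmid, intervalIntegral.integral_const_mul, hf_zero]
  ring

theorem integral_half_sub_sq (a : ℝ) : ∫ x in (0:ℝ)..a, (a / 2 - x) ^ 2 = a ^ 3 / 12 := by
  simp [integral_comp_sub_left (fun x => x ^ 2)]
  ring

theorem integral_mul_sub_div_two (a : ℝ) : ∫ x in (0:ℝ)..a, x * (a - x) / 2 = a ^ 3 / 12 := by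
  have hpoly : ∀ x : ℝ, x * (a - x) / 2 = a / 2 * x - 1 / 2 * x ^ 2 := fun x => by ring
  rw [funext hpoly, intervalIntegral.integral_sub (intervalIntegrable_id.const_mul _)
    ((intervalIntegrable_pow 2).const_mul _), intervalIntegral.integral_const_mul,
    intervalIntegral.integral_const_mul, integral_id, integral_pow]
  ring

/-- For any `u ∈ H¹(0,a)` with `u(0) = u(a) = 0` and `u` not identically zero, the Pólya
quotient `(∫₀ᵃ u)² / ∫₀ᵃ (u')²` is at most `a³/12`, with equality attained by
`u(x) = x(a-x)/2` (whose derivative is `a/2 - x`). -/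
theorem stmt5 (a : ℝ) (ha : 0 < a) :
    (∀ u u' : ℝ → ℝ,
        IntervalIntegrable u' volume 0 a →
        IntervalIntegrable (fun x => (u' x) ^ 2) volume 0 a →
        (∀ x ∈ Set.Icc (0:ℝ) a, u x = ∫ t in (0:ℝ)..x, u' t) →
        u a = 0 →
        0 < (∫ x in (0:ℝ)..a, (u' x) ^ 2) →
        (∫ x in (0:ℝ)..a, u x) ^ 2 / (∫ x in (0:ℝ)..a, (u' x) ^ 2) ≤ a ^ 3 / 12) ∧
      (∫ x in (0:ℝ)..a, x * (a - x) / 2) ^ 2 /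
          (∫ x in (0:ℝ)..a, (a / 2 - x) ^ 2) = a ^ 3 / 12 := by
  constructor
  · intro u u' hu' hu'_sq hu_eq hua hpos
    have hu_int : ∫ x in (0:ℝ)..a, u x = ∫ x in (0:ℝ)..a, (∫ t in (0:ℝ)..x, u' t) :=
      integral_congr fun x hx => hu_eq x (Set.uIcc_of_le ha.le ▸ hx)
    have hu'_int : ∫ t in (0:ℝ)..a, u' t = 0 := hu_eq a ⟨ha.le, le_rfl⟩ ▸ hua
    rw [div_le_iff₀ hpos, hu_int, integral_primitive_eq_integral_midpoint_sub_mul hu' hu'_int,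
      zero_add, ← integral_half_sub_sq]
    have hw_sq : IntervalIntegrable (fun x => (a / 2 - x) ^ 2) volume 0 a :=
      ((continuous_const.sub continuous_id).pow 2).intervalIntegrable _ _
    exact intervalIntegral.sq_integral_mul_le ha.le hw_sq hu'_sq
      (hu'.continuousOn_mul (by fun_prop))
  · rw [integral_mul_sub_div_two, integral_half_sub_sq, sq]
    exact mul_self_div_self _
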